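/- Let X, Z be metric spaces, z* ∈ Z an isolated point, and 0 < μ < min{2·d_GH(X,Z), 2·S(z*)} where S(z*) = inf{d(z*,z) : z ≠ z*}. Let W be the metric space obtained from Z by replacing z* with a simplex of pairwise distance μ on an arbitrary nonempty index set I, each simplex vertex inheriting the distances of z* to Z ∖ {z*}. Then d_GH(X, W) ≤ d_GH(X, Z). -/
import Mathlib


open scoped ENNReal

/-- A correspondence between `X` and `Y`: a relation whose projections are surjective. -/
def IsCorr {X Y : Type*} (R : Set (X × Y)) : Prop :=
  (∀ x : X, ∃ y : Y, (x, y) ∈ R) ∧ (∀ y : Y, ∃ x : X, (x, y) ∈ R)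

/-- The distortion of a relation: `sup |d(x,x') - d(y,y')|` over pairs in `R`. -/
noncomputable def corrDis {X Y : Type*} [MetricSpace X] [MetricSpace Y]
    (R : Set (X × Y)) : ℝ≥0∞ :=
  ⨆ p ∈ R, ⨆ q ∈ R, edist (dist p.1 q.1) (dist p.2 q.2)

/-- The Gromov–Hausdorff distance: half the infimal distortion of correspondences. -/
noncomputable def ghDist (X Y : Type*) [MetricSpace X] [MetricSpace Y] : ℝ≥0∞ :=
  (⨅ (R : Set (X × Y)) (_ : IsCorr R), corrDis R) / 2

/-- The distance on `W = I ⊔ (Z ∖ {z*})`: the original metric on `Z ∖ {z*}`, `μ` between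
distinct simplex vertices `i ∈ I`, and `dist z* w` between simplex vertices and `w ∈ Z ∖ {z*}`. -/
noncomputable def dW {Z : Type*} [MetricSpace Z] (zs : Z) (μ : ℝ) {I : Type*} [DecidableEq I] :
    I ⊕ {z : Z // z ≠ zs} → I ⊕ {z : Z // z ≠ zs} → ℝ
  | Sum.inl i, Sum.inl j => if i = j then 0 else μ
  | Sum.inl _, Sum.inr w => dist zs w.1
  | Sum.inr w, Sum.inl _ => dist zs w.1
  | Sum.inr w, Sum.inr w' => dist w.1 w'.1

/-- `S(z*) = inf {d(z*,z) : z ≠ z*}`. -/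
noncomputable def isolR {Z : Type*} [MetricSpace Z] (zs : Z) : ℝ :=
  sInf {r : ℝ | ∃ z : Z, z ≠ zs ∧ r = dist zs z}

lemma le_corrDis {X Y : Type*} [MetricSpace X] [MetricSpace Y] {R : Set (X × Y)}
    {p q : X × Y} (hp : p ∈ R) (hq : q ∈ R) :
    edist (dist p.1 q.1) (dist p.2 q.2) ≤ corrDis R := by
  exact le_iSup₂_of_le p hp (le_iSup₂_of_le q hq le_rfl)

lemma corrDis_le {X Y : Type*} [MetricSpace X] [MetricSpace Y] {R : Set (X × Y)} {c : ℝ≥0∞}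
    (h : ∀ p ∈ R, ∀ q ∈ R, edist (dist p.1 q.1) (dist p.2 q.2) ≤ c) : corrDis R ≤ c :=
  iSup₂_le fun p hp => iSup₂_le fun q hq => h p hp q hq

lemma edist_le_max_of_nonneg {a b : ℝ} (ha : 0 ≤ a) (hb : 0 ≤ b) :
    edist a b ≤ max (ENNReal.ofReal a) (ENNReal.ofReal b) := by
  rw [edist_dist, Real.dist_eq]
  rcases le_total b a with h | h
  · refine le_max_of_le_left (ENNReal.ofReal_le_ofReal ?_)
    rw [abs_of_nonneg (by linarith)]; linarith
  · refine le_max_of_le_right (ENNReal.ofReal_le_ofReal ?_)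
    rw [abs_of_nonpos (by linarith)]; linarith

/-- Replacing the isolated point `z*` by a `μ`-simplex does not increase the
Gromov–Hausdorff distance to `X`. -/
theorem stmt6 {X Z : Type*} [MetricSpace X] [MetricSpace Z] (zs : Z)
    (hiso : 0 < isolR zs) (μ : ℝ) (hμ0 : 0 < μ)
    (hμX : ENNReal.ofReal μ < 2 * ghDist X Z) (hμS : μ < 2 * isolR zs)
    {I : Type*} [DecidableEq I] [Nonempty I]
    [MetricSpace (I ⊕ {z : Z // z ≠ zs})]
    (hm : ∀ a b : I ⊕ {z : Z // z ≠ zs}, dist a b = dW zs μ a b) :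
    ghDist X (I ⊕ {z : Z // z ≠ zs}) ≤ ghDist X Z := by
  have h2 : 2 * ghDist X Z = ⨅ (R : Set (X × Z)) (_ : IsCorr R), corrDis R := by
    rw [ghDist, mul_comm, ENNReal.div_mul_cancel (by norm_num) (by norm_num)]
  rw [h2] at hμX
  unfold ghDist
  refine ENNReal.div_le_div_right ?_ 2
  refine le_iInf₂ fun R hR => ?_
  -- build the correspondence with W
  set R' : Set (X × (I ⊕ {z : Z // z ≠ zs})) := {p | match p.2 with
    | Sum.inl _ => (p.1, zs) ∈ R
    | Sum.inr w => (p.1, w.1) ∈ R} with hR'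
  have hmem : ∀ x (w : I ⊕ {z : Z // z ≠ zs}), (x, w) ∈ R' ↔
      (match w with | Sum.inl _ => (x, zs) ∈ R | Sum.inr w => (x, w.1) ∈ R) := by
    intro x w; rfl
  have hcorr : IsCorr R' := by
    constructor
    · intro x
      obtain ⟨z, hz⟩ := hR.1 x
      by_cases h : z = zs
      · exact ⟨Sum.inl (Classical.arbitrary I), by simp [hmem, ← h, hz]⟩
      · exact ⟨Sum.inr ⟨z, h⟩, by simp [hmem, hz]⟩
    · intro w
      match w with
      | Sum.inl i => obtain ⟨x, hx⟩ := hR.2 zs; exact ⟨x, by simp [hmem, hx]⟩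
      | Sum.inr w => obtain ⟨x, hx⟩ := hR.2 w.1; exact ⟨x, by simp [hmem, hx]⟩
  have hμle : ENNReal.ofReal μ ≤ corrDis R := le_of_lt (lt_of_lt_of_le hμX (iInf₂_le R hR))
  have hdis : corrDis R' ≤ corrDis R := by
    refine corrDis_le fun p hp q hq => ?_
    obtain ⟨x, w⟩ := p
    obtain ⟨x', w'⟩ := q
    rw [hmem] at hp hq
    simp only at hp hq ⊢
    rw [hm]
    match w, w' with
    | Sum.inl i, Sum.inl j =>
      by_cases h : i = j
      · rw [show dW zs μ (Sum.inl i) (Sum.inl j) = dist zs zs by simp [dW, h]]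
        exact le_corrDis (p := (x, zs)) (q := (x', zs)) hp hq
      · have hd : ENNReal.ofReal (dist x x') ≤ corrDis R := by
          have := le_corrDis (p := (x, zs)) (q := (x', zs)) hp hq
          simpa [edist_dist, Real.dist_eq, abs_of_nonneg dist_nonneg] using this
        calc edist (dist x x') (dW zs μ (Sum.inl i) (Sum.inl j))
            = edist (dist x x') μ := by simp [dW, h]
          _ ≤ max (ENNReal.ofReal (dist x x')) (ENNReal.ofReal μ) :=
              edist_le_max_of_nonneg dist_nonneg hμ0.le
          _ ≤ corrDis R := max_le hd hμle
    | Sum.inl i, Sum.inr w' =>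
      simpa [dW] using le_corrDis (p := (x, zs)) (q := (x', w'.1)) hp hq
    | Sum.inr w, Sum.inl j =>
      simpa [dW, dist_comm] using le_corrDis (p := (x, w.1)) (q := (x', zs)) hp hq
    | Sum.inr w, Sum.inr w' =>
      simpa [dW] using le_corrDis (p := (x, w.1)) (q := (x', w'.1)) hp hq
  exact le_trans (iInf₂_le R' hcorr) hdis
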